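/- Under randomization of Z, exclusion restriction, and monotonicity Y₀ ≤ Y₁, if the numerator N := P(R=1,Y=0 | Z=1) − P(R=1,Y=0 | Z=0) is nonnegative, then N / (1 − max_z P(Y=1 | Z=z)) ≤ APCE_AL ≤ N / max_z P(R=1, Y=0 | Z=z), provided both denominators are positive. -/
import Mathlib


open Finset
open scoped Classical

namespace PS

/-- Probability of an event `A` under weight function `p` on a finite sample space. -/
noncomputable def Prob {Ω : Type*} [Fintype Ω] (p : Ω → ℝ) (A : Ω → Prop) : ℝ :=
  ∑ ω ∈ Finset.univ.filter A, p ω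

/-- Conditional probability `P(A | B)`. -/
noncomputable def CProb {Ω : Type*} [Fintype Ω] (p : Ω → ℝ) (A B : Ω → Prop) : ℝ :=
  Prob p (fun ω => A ω ∧ B ω) / Prob p B

/-- Conditional expectation `E[f | B]`. -/
noncomputable def CExp {Ω : Type*} [Fintype Ω] (p : Ω → ℝ) (f : Ω → ℝ) (B : Ω → Prop) : ℝ :=
  (∑ ω ∈ Finset.univ.filter B, p ω * f ω) / Prob p B

/-- Indicator of a Boolean value, as a real number. -/
def ind (b : Bool) : ℝ := if b then 1 else 0

/-- Observed recommendation `R = R_Z`. -/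
def obsR {Ω : Type*} (Z R₀ R₁ : Ω → Bool) (ω : Ω) : Bool := if Z ω then R₁ ω else R₀ ω

/-- Observed outcome `Y = Y_R` (exclusion restriction). -/
def obsY {Ω : Type*} (Rv Y₀ Y₁ : Ω → Bool) (ω : Ω) : Bool := if Rv ω then Y₁ ω else Y₀ ω

/-- `Z` is independent of the vector `(R₀, R₁, Y₀, Y₁)`. -/
def IndepZ {Ω : Type*} [Fintype Ω] (p : Ω → ℝ) (Z R₀ R₁ Y₀ Y₁ : Ω → Bool) : Prop :=
  ∀ z a b c d : Bool,
    Prob p (fun ω => Z ω = z ∧ R₀ ω = a ∧ R₁ ω = b ∧ Y₀ ω = c ∧ Y₁ ω = d) =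
      Prob p (fun ω => Z ω = z) *
        Prob p (fun ω => R₀ ω = a ∧ R₁ ω = b ∧ Y₀ ω = c ∧ Y₁ ω = d)

section Aux
variable {Ω : Type*} [Fintype Ω] (p : Ω → ℝ)

lemma Prob_congr {A B : Ω → Prop} (h : ∀ ω, A ω ↔ B ω) : Prob p A = Prob p B := by
  unfold Prob
  congr 1
  exact Finset.filter_congr (fun ω _ => by simpa using h ω)

lemma Prob_mono (hp : ∀ ω, 0 ≤ p ω) {A B : Ω → Prop} (h : ∀ ω, A ω → B ω) :
    Prob p A ≤ Prob p B := by
  apply Finset.sum_le_sum_of_subset_of_nonneg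
  · intro ω hω; simp only [Finset.mem_filter] at *; exact ⟨hω.1, h ω hω.2⟩
  · exact fun ω _ _ => hp ω

lemma Prob_eq_sum_ite (A : Ω → Prop) : Prob p A = ∑ ω, if A ω then p ω else 0 := by
  rw [Prob, Finset.sum_filter]

lemma Prob_add_compl (hsum : ∑ ω, p ω = 1) (A : Ω → Prop) :
    Prob p A + Prob p (fun ω => ¬ A ω) = 1 := by
  rw [Prob_eq_sum_ite, Prob_eq_sum_ite, ← Finset.sum_add_distrib, ← hsum]
  apply Finset.sum_congr rfl
  intro ω _
  by_cases h : A ω <;> simp [h]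

lemma Prob_decomp (W : Ω → Prop) (R₀ R₁ Y₀ Y₁ : Ω → Bool)
    (B : Bool → Bool → Bool → Bool → Prop) :
    Prob p (fun ω => W ω ∧ B (R₀ ω) (R₁ ω) (Y₀ ω) (Y₁ ω)) =
      ∑ q : Bool × Bool × Bool × Bool, if B q.1 q.2.1 q.2.2.1 q.2.2.2 then
        Prob p (fun ω => W ω ∧ R₀ ω = q.1 ∧ R₁ ω = q.2.1 ∧ Y₀ ω = q.2.2.1 ∧ Y₁ ω = q.2.2.2)
        else 0 := by
  have step : ∀ q : Bool × Bool × Bool × Bool,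
      (if B q.1 q.2.1 q.2.2.1 q.2.2.2 then
        Prob p (fun ω => W ω ∧ R₀ ω = q.1 ∧ R₁ ω = q.2.1 ∧ Y₀ ω = q.2.2.1 ∧ Y₁ ω = q.2.2.2)
       else 0) =
      Prob p (fun ω => B q.1 q.2.1 q.2.2.1 q.2.2.2 ∧ W ω ∧ R₀ ω = q.1 ∧ R₁ ω = q.2.1 ∧ Y₀ ω = q.2.2.1 ∧ Y₁ ω = q.2.2.2) := by
    intro q
    by_cases hB : B q.1 q.2.1 q.2.2.1 q.2.2.2
    · rw [if_pos hB]
      unfold Prob; congr 1; ext ω; simp [hB]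
    · rw [if_neg hB]
      unfold Prob
      rw [Finset.sum_filter]
      symm
      apply Finset.sum_eq_zero
      intro ω _
      rw [if_neg (fun h => hB h.1)]
  refine Eq.trans ?_ (Finset.sum_congr rfl (fun q _ => (step q).symm))
  simp only [Prob_eq_sum_ite]
  rw [Finset.sum_comm]
  apply Finset.sum_congr rfl
  intro ω _
  rw [Finset.sum_eq_single (R₀ ω, R₁ ω, Y₀ ω, Y₁ ω)]
  · by_cases hB : B (R₀ ω) (R₁ ω) (Y₀ ω) (Y₁ ω) <;> by_cases hW : W ω <;> simp [hB, hW]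
  · intro q _ hq
    rw [if_neg]
    rintro ⟨-, -, h1, h2, h3, h4⟩
    exact hq (by rw [h1, h2, h3, h4])
  · intro h
    exact absurd (Finset.mem_univ _) h

lemma indep_fun (Z R₀ R₁ Y₀ Y₁ : Ω → Bool) (hindep : IndepZ p Z R₀ R₁ Y₀ Y₁)
    (B : Bool → Bool → Bool → Bool → Prop) (z : Bool) :
    Prob p (fun ω => Z ω = z ∧ B (R₀ ω) (R₁ ω) (Y₀ ω) (Y₁ ω)) =
      Prob p (fun ω => Z ω = z) * Prob p (fun ω => B (R₀ ω) (R₁ ω) (Y₀ ω) (Y₁ ω)) := by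
  rw [Prob_decomp]
  have h2 : Prob p (fun ω => B (R₀ ω) (R₁ ω) (Y₀ ω) (Y₁ ω)) =
      Prob p (fun ω => True ∧ B (R₀ ω) (R₁ ω) (Y₀ ω) (Y₁ ω)) := by
    simp [Prob]
  rw [h2, Prob_decomp, Finset.mul_sum]
  apply Finset.sum_congr rfl
  intro q _
  by_cases hB : B q.1 q.2.1 q.2.2.1 q.2.2.2
  · simp only [hB, if_true]
    rw [hindep z q.1 q.2.1 q.2.2.1 q.2.2.2]
    congr 1
    unfold Prob
    congr 1
    ext ω
    simp
  · simp [hB]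

lemma CProb_eq (Z R₀ R₁ Y₀ Y₁ : Ω → Bool) (hindep : IndepZ p Z R₀ R₁ Y₀ Y₁)
    (hZpos : ∀ z : Bool, 0 < Prob p (fun ω => Z ω = z))
    (A : Ω → Prop) (B : Bool → Bool → Bool → Bool → Prop) (z : Bool)
    (h : ∀ ω, (A ω ∧ Z ω = z) ↔ (Z ω = z ∧ B (R₀ ω) (R₁ ω) (Y₀ ω) (Y₁ ω))) :
    CProb p A (fun ω => Z ω = z) = Prob p (fun ω => B (R₀ ω) (R₁ ω) (Y₀ ω) (Y₁ ω)) := by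
  unfold CProb
  rw [Prob_congr p h, indep_fun p Z R₀ R₁ Y₀ Y₁ hindep B z]
  exact mul_div_cancel_left₀ _ (ne_of_gt (hZpos z))

lemma sum_ind (A : Ω → Prop) (R : Ω → Bool) :
    ∑ ω ∈ Finset.univ.filter A, p ω * ind (R ω) = Prob p (fun ω => A ω ∧ R ω = true) := by
  rw [Finset.sum_filter, Prob_eq_sum_ite]
  apply Finset.sum_congr rfl
  intro ω _
  by_cases hA : A ω <;> cases hR : R ω <;> simp [ind, hA, hR]

end Aux

theorem stmt18 {Ω : Type*} [Fintype Ω] (p : Ω → ℝ) (Z R₀ R₁ Y₀ Y₁ : Ω → Bool)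
    (hp : ∀ ω, 0 ≤ p ω) (hsum : ∑ ω, p ω = 1)
    (hZpos : ∀ z : Bool, 0 < Prob p (fun ω => Z ω = z))
    (hindep : IndepZ p Z R₀ R₁ Y₀ Y₁)
    (hmono : ∀ ω, Y₀ ω = true → Y₁ ω = true)
    (hAL : 0 < Prob p (fun ω => Y₀ ω = false ∧ Y₁ ω = false))
    (hden1 : 0 < 1 - max (CProb p (fun ω => obsY (obsR Z R₀ R₁) Y₀ Y₁ ω = true) (fun ω => Z ω = true)) (CProb p (fun ω => obsY (obsR Z R₀ R₁) Y₀ Y₁ ω = true) (fun ω => Z ω = false)))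
    (hden2 : 0 < max (CProb p (fun ω => obsY (obsR Z R₀ R₁) Y₀ Y₁ ω = false ∧ obsR Z R₀ R₁ ω = true) (fun ω => Z ω = true)) (CProb p (fun ω => obsY (obsR Z R₀ R₁) Y₀ Y₁ ω = false ∧ obsR Z R₀ R₁ ω = true) (fun ω => Z ω = false)))
    (hN : 0 ≤ (CProb p (fun ω => obsY (obsR Z R₀ R₁) Y₀ Y₁ ω = false ∧ obsR Z R₀ R₁ ω = true) (fun ω => Z ω = true) - CProb p (fun ω => obsY (obsR Z R₀ R₁) Y₀ Y₁ ω = false ∧ obsR Z R₀ R₁ ω = true) (fun ω => Z ω = false))) :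
    (CProb p (fun ω => obsY (obsR Z R₀ R₁) Y₀ Y₁ ω = false ∧ obsR Z R₀ R₁ ω = true) (fun ω => Z ω = true) - CProb p (fun ω => obsY (obsR Z R₀ R₁) Y₀ Y₁ ω = false ∧ obsR Z R₀ R₁ ω = true) (fun ω => Z ω = false)) / (1 - max (CProb p (fun ω => obsY (obsR Z R₀ R₁) Y₀ Y₁ ω = true) (fun ω => Z ω = true)) (CProb p (fun ω => obsY (obsR Z R₀ R₁) Y₀ Y₁ ω = true) (fun ω => Z ω = false))) ≤ CExp p (fun ω => ind (R₁ ω) - ind (R₀ ω)) (fun ω => Y₀ ω = false ∧ Y₁ ω = false) ∧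
    CExp p (fun ω => ind (R₁ ω) - ind (R₀ ω)) (fun ω => Y₀ ω = false ∧ Y₁ ω = false) ≤ (CProb p (fun ω => obsY (obsR Z R₀ R₁) Y₀ Y₁ ω = false ∧ obsR Z R₀ R₁ ω = true) (fun ω => Z ω = true) - CProb p (fun ω => obsY (obsR Z R₀ R₁) Y₀ Y₁ ω = false ∧ obsR Z R₀ R₁ ω = true) (fun ω => Z ω = false)) / (max (CProb p (fun ω => obsY (obsR Z R₀ R₁) Y₀ Y₁ ω = false ∧ obsR Z R₀ R₁ ω = true) (fun ω => Z ω = true)) (CProb p (fun ω => obsY (obsR Z R₀ R₁) Y₀ Y₁ ω = false ∧ obsR Z R₀ R₁ ω = true) (fun ω => Z ω = false))) := by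

  have hr : ∀ z : Bool, CProb p (fun ω => obsY (obsR Z R₀ R₁) Y₀ Y₁ ω = false ∧ obsR Z R₀ R₁ ω = true) (fun ω => Z ω = z) =
      Prob p (fun ω => (if z then R₁ ω else R₀ ω) = true ∧ Y₁ ω = false) := by
    intro z
    apply CProb_eq p Z R₀ R₁ Y₀ Y₁ hindep hZpos _
      (fun a b c d => (if z then b else a) = true ∧ d = false) z
    intro ω
    cases hZ : Z ω <;> cases z <;> cases hR1 : R₁ ω <;> cases hR0 : R₀ ω <;>
      simp [obsR, obsY, hZ, hR1, hR0]
  have hq : ∀ z : Bool, CProb p (fun ω => obsY (obsR Z R₀ R₁) Y₀ Y₁ ω = true) (fun ω => Z ω = z) =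
      Prob p (fun ω => if (if z then R₁ ω else R₀ ω) = true then Y₁ ω = true else Y₀ ω = true) := by
    intro z
    apply CProb_eq p Z R₀ R₁ Y₀ Y₁ hindep hZpos _
      (fun a b c d => if (if z then b else a) = true then d = true else c = true) z
    intro ω
    cases hZ : Z ω <;> cases z <;> cases hR1 : R₁ ω <;> cases hR0 : R₀ ω <;>
      simp [obsR, obsY, hZ, hR1, hR0]
  have hrT := hr true
  have hrF := hr false
  have hqT := hq true
  have hqF := hq false
  simp only [if_true, Bool.false_eq_true, if_false] at hrT hrF hqT hqF
  simp only [hrT, hrF, hqT, hqF] at hden1 hden2 hN ⊢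
  set AL : Ω → Prop := fun ω => Y₀ ω = false ∧ Y₁ ω = false with hALdef
  have hY1AL : ∀ ω, Y₁ ω = false → AL ω := by
    intro ω h
    refine ⟨?_, h⟩
    cases hY0 : Y₀ ω
    · rfl
    · rw [hmono ω hY0] at h; exact absurd h (by simp)
  have hCExp : CExp p (fun ω => ind (R₁ ω) - ind (R₀ ω)) AL =
      (Prob p (fun ω => R₁ ω = true ∧ Y₁ ω = false) -
        Prob p (fun ω => R₀ ω = true ∧ Y₁ ω = false)) / Prob p AL := by
    unfold CExp
    congr 1
    refine Eq.trans (Finset.sum_congr rfl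
      (fun ω _ => mul_sub (p ω) (ind (R₁ ω)) (ind (R₀ ω)))) ?_
    rw [Finset.sum_sub_distrib, sum_ind, sum_ind]
    congr 1
    · exact Prob_congr p (fun ω => ⟨fun h => ⟨h.2, h.1.2⟩, fun h => ⟨hY1AL ω h.2, h.1⟩⟩)
    · exact Prob_congr p (fun ω => ⟨fun h => ⟨h.2, h.1.2⟩, fun h => ⟨hY1AL ω h.2, h.1⟩⟩)
  rw [hCExp]
  have haL : 0 < Prob p AL := hAL
  have hlow : ∀ R : Ω → Bool, Prob p (fun ω => R ω = true ∧ Y₁ ω = false) ≤ Prob p AL :=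
    fun R => Prob_mono p hp (fun ω h => hY1AL ω h.2)
  have hmaxle : max (Prob p fun ω => R₁ ω = true ∧ Y₁ ω = false)
      (Prob p fun ω => R₀ ω = true ∧ Y₁ ω = false) ≤ Prob p AL :=
    max_le (hlow R₁) (hlow R₀)
  have hup : ∀ R : Ω → Bool,
      Prob p AL ≤ 1 - Prob p (fun ω => if R ω = true then Y₁ ω = true else Y₀ ω = true) := by
    intro R
    have h1 : Prob p (fun ω => if R ω = true then Y₁ ω = true else Y₀ ω = true) ≤
        Prob p (fun ω => ¬ (Y₁ ω = false)) := by
      apply Prob_mono p hp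
      intro ω h
      cases hR : R ω
      · rw [hR] at h; simp only [Bool.false_eq_true, if_false] at h
        rw [hmono ω h]; simp
      · rw [hR] at h; simp only [if_true] at h
        rw [h]; simp
    have h2 : Prob p AL ≤ Prob p (fun ω => Y₁ ω = false) :=
      Prob_mono p hp (fun ω h => h.2)
    have h3 : Prob p (fun ω => Y₁ ω = false) + Prob p (fun ω => ¬ (Y₁ ω = false)) = 1 :=
      Prob_add_compl p hsum _
    linarith
  have hALle : Prob p AL ≤ 1 - max (Prob p fun ω => if R₁ ω = true then Y₁ ω = true else Y₀ ω = true)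
      (Prob p fun ω => if R₀ ω = true then Y₁ ω = true else Y₀ ω = true) := by
    rw [le_sub_iff_add_le, add_comm, ← le_sub_iff_add_le]
    exact max_le (by linarith [hup R₁]) (by linarith [hup R₀])
  constructor
  · exact div_le_div_of_nonneg_left hN haL hALle
  · exact div_le_div_of_nonneg_left hN hden2 hmaxle


end PS
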